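/- arXiv:1711.09770 — 2 statements merged into one kernel-verified Lean document; each statement's English description precedes it below -/
import Mathlib

section
/- Let ξ, η ∈ ℝⁿ with |ξ| = 1 and ξ·η = 0, let k ∈ ℤ + 1/2, let l = c·(1, -(2πk/|η|²)η) ∈ ℝ^{1+n} for some constant c ∈ ℝ, and define τ = sqrt(|η|²/4 + π²k² + |l|²). Set ζ₁ = (iπk, -τξ + iη/2) + il. Then ζ₁·ζ₁ = 0, where the dot product is the bilinear product Σ ζⱼ². -/
open Complex Real

/-! Writing `d = 1/2 - 2πkc/|η|²`, the spatial part of `ζ₁` is `-τξ + i d η`. Since `ξ ⊥ η` and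
`|ξ| = 1`, its bilinear square is `τ² - d²|η|²`, and the choice of `τ` makes this equal to
`(πk + c)²`, which cancels the square `-(πk + c)²` of the first component. -/

theorem EuclideanSpace.sum_sq_ofReal_add_I_mul {ι : Type*} [Fintype ι]
    (u v : EuclideanSpace ℝ ι) :
    ∑ j, ((u j : ℂ) + I * v j) ^ 2 = ((‖u‖ ^ 2 - ‖v‖ ^ 2 : ℝ) : ℂ) + 2 * I * (inner ℝ u v : ℝ) := by
  simp only [EuclideanSpace.real_norm_sq_eq, PiLp.inner_apply, RCLike.inner_apply, conj_trivial]
  push_cast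
  rw [Finset.mul_sum, ← Finset.sum_sub_distrib, ← Finset.sum_add_distrib]
  refine Finset.sum_congr rfl fun j _ => ?_
  linear_combination (v j : ℂ) ^ 2 * I_sq

theorem stmt1_general (n : ℕ) (ξ η : EuclideanSpace ℝ (Fin n)) (hξ : ‖ξ‖ = 1)
    (hη : η ≠ 0) (hξη : inner ℝ ξ η = (0 : ℝ))
    (k : ℝ) (c : ℝ)
    (l : ℝ × (Fin n → ℝ))
    (hl : l = (c, fun j => c * (-(2 * π * k / ‖η‖^2) * η j)))
    (τ : ℝ) (hτ : τ = Real.sqrt (‖η‖^2/4 + π^2 * k^2 + (l.1^2 + ∑ j, (l.2 j)^2)))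
    (ζ₁ : ℂ × (Fin n → ℂ))
    (hζ₁ : ζ₁ = (Complex.I * π * k + Complex.I * l.1,
      fun j => -τ * ξ j + Complex.I * (η j) / 2 + Complex.I * (l.2 j))) :
    ζ₁.1 ^ 2 + ∑ j, (ζ₁.2 j) ^ 2 = 0 := by
  subst hζ₁ hl
  dsimp only at hτ ⊢
  have hN : ‖η‖ ^ 2 ≠ 0 := by positivity
  set d : ℝ := 1 / 2 - 2 * π * k * c / ‖η‖ ^ 2
  have hτ_sq : τ ^ 2 = ‖η‖ ^ 2 / 4 + π ^ 2 * k ^ 2 + c ^ 2 + (2 * π * k * c) ^ 2 / ‖η‖ ^ 2 := by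
    have hl_sq : ∑ j, (c * (-(2 * π * k / ‖η‖ ^ 2) * η j)) ^ 2
        = (2 * π * k * c) ^ 2 / ‖η‖ ^ 2 := by
      simp only [mul_pow, ← Finset.mul_sum, ← EuclideanSpace.real_norm_sq_eq]
      field_simp
    rw [hτ, Real.sq_sqrt (by positivity), hl_sq]
    ring
  have h_spatial : ∀ j, -(τ : ℂ) * ξ j + I * η j / 2
      + I * ((c * (-(2 * π * k / ‖η‖ ^ 2) * η j) : ℝ) : ℂ) = ((-τ • ξ) j : ℂ) + I * ((d • η) j) := by
    intro j
    simp only [PiLp.smul_apply, smul_eq_mul, d]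
    push_cast
    ring
  have h_norm_ξ : ‖-τ • ξ‖ ^ 2 = τ ^ 2 := by rw [norm_smul, hξ, Real.norm_eq_abs]; simp
  have h_norm_η : ‖d • η‖ ^ 2 = d ^ 2 * ‖η‖ ^ 2 := by
    rw [norm_smul, Real.norm_eq_abs, mul_pow, sq_abs]
  have h_inner : inner ℝ (-τ • ξ) (d • η) = 0 := by
    rw [real_inner_smul_left, real_inner_smul_right, hξη]; ring
  have h_cancel : τ ^ 2 - d ^ 2 * ‖η‖ ^ 2 = (π * k + c) ^ 2 := by
    rw [hτ_sq]; simp only [d]; field_simp; ring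
  simp only [h_spatial]
  rw [EuclideanSpace.sum_sq_ofReal_add_I_mul, h_norm_ξ, h_norm_η, h_inner, h_cancel]
  push_cast
  linear_combination (π * k + c : ℂ) ^ 2 * I_sq

/-- with l = c·(1, -(2πk/|η|²)η) and τ = sqrt(|η|²/4 + π²k² + |l|²),
the vector ζ₁ = (iπk, -τξ + iη/2) + il satisfies ζ₁·ζ₁ = 0 (bilinear dot product). -/
theorem stmt1 (n : ℕ) (ξ η : EuclideanSpace ℝ (Fin n)) (hξ : ‖ξ‖ = 1)
    (hη : η ≠ 0) (hξη : inner ℝ ξ η = (0 : ℝ))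
    (k : ℝ) (hk : ∃ m : ℤ, k = m + 1/2) (c : ℝ)
    (l : ℝ × (Fin n → ℝ))
    (hl : l = (c, fun j => c * (-(2 * π * k / ‖η‖^2) * η j)))
    (τ : ℝ) (hτ : τ = Real.sqrt (‖η‖^2/4 + π^2 * k^2 + (l.1^2 + ∑ j, (l.2 j)^2)))
    (ζ₁ : ℂ × (Fin n → ℂ))
    (hζ₁ : ζ₁ = (Complex.I * π * k + Complex.I * l.1,
      fun j => -τ * ξ j + Complex.I * (η j) / 2 + Complex.I * (l.2 j))) :
    ζ₁.1 ^ 2 + ∑ j, (ζ₁.2 j) ^ 2 = 0 :=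
  stmt1_general n ξ η hξ hη hξη k c l hl τ hτ ζ₁ hζ₁
end

section
/- Let f: ℝ^{1+n} → ℝ be bounded with ‖f‖_∞ ≤ M and suppose that for all y ∈ ℝ^{1+n} with |y| < δ we have ‖f(·+y) - f‖_{L¹} ≤ C|y|^α for some α ∈ (0,1] and the Fourier transform f̂ is well defined (f ∈ L¹). Then there exist constants C', ε₀ > 0 such that for all 0 < ε < ε₀ and all ρ ∈ ℝ^{1+n}: |f̂(ρ)| ≤ C'(exp(-ε²|ρ|²/(4π)) + ε^α). -/
/-!
Translating `f` by the half period `y = ρ / (2‖ρ‖²)` multiplies `𝓕 f ρ` by `-1`, so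
`2 ‖𝓕 f ρ‖ ≤ ‖f(· + y) - f‖_{L¹} ≤ C (2‖ρ‖)^{-α}`. For `ε‖ρ‖ > 1` this is at most `|C| ε^α`;
for `ε‖ρ‖ ≤ 1` the Gaussian factor is at least `e⁻¹` and the trivial bound `‖𝓕 f‖ ≤ ‖f‖_{L¹}`
suffices.
-/

open MeasureTheory Real FourierTransform
open scoped RealInnerProductSpace

section HolderDecay

variable {V E : Type*} [NormedAddCommGroup V] [InnerProductSpace ℝ V]

lemma norm_halfPeriod_smul (w : V) : ‖(1 / (2 * ‖w‖ ^ 2) : ℝ) • w‖ = (2 * ‖w‖)⁻¹ := by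
  rw [norm_smul, Real.norm_of_nonneg (by positivity)]
  rcases eq_or_ne ‖w‖ 0 with hw | hw
  · simp [hw]
  · field_simp

variable [MeasurableSpace V] [BorelSpace V] [FiniteDimensional ℝ V]
  [NormedAddCommGroup E] [NormedSpace ℂ E]

lemma norm_fourier_le_half_integral_norm_sub_translate {f : V → E} (hf : Integrable f) {w : V}
    (hw : w ≠ 0) :
    ‖𝓕 f w‖ ≤ (∫ v, ‖f (v + (1 / (2 * ‖w‖ ^ 2) : ℝ) • w) - f v‖) / 2 := by
  rw [Real.fourier_eq, fourierIntegral_eq_half_sub_half_period_translate hw hf, norm_smul,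
    show ‖(1 / 2 : ℂ)‖ = 2⁻¹ by norm_num, inv_mul_eq_div]
  refine div_le_div_of_nonneg_right ((norm_integral_le_integral_norm _).trans_eq ?_) zero_le_two
  congr 1 with v
  rw [Circle.norm_smul, norm_sub_rev]

lemma norm_fourier_le_of_integral_norm_sub_le {f : V → E} (hf : Integrable f) {δ C α : ℝ}
    (hmod : ∀ y : V, ‖y‖ < δ → ∫ x, ‖f (x + y) - f x‖ ≤ C * ‖y‖ ^ α) {w : V} (hw : w ≠ 0)
    (hwδ : (2 * ‖w‖)⁻¹ < δ) :
    ‖𝓕 f w‖ ≤ C / 2 * (2 * ‖w‖)⁻¹ ^ α := by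
  have hy := norm_halfPeriod_smul w
  calc ‖𝓕 f w‖ ≤ (∫ v, ‖f (v + (1 / (2 * ‖w‖ ^ 2) : ℝ) • w) - f v‖) / 2 :=
        norm_fourier_le_half_integral_norm_sub_translate hf hw
    _ ≤ C * (2 * ‖w‖)⁻¹ ^ α / 2 := by
        gcongr
        rw [← hy]
        exact hmod _ (hy ▸ hwδ)
    _ = C / 2 * (2 * ‖w‖)⁻¹ ^ α := by ring

lemma norm_fourier_le_exp_one_mul_gaussian (f : V → E) {ε : ℝ} (hε : 0 ≤ ε) {w : V}
    (hεw : ε * ‖w‖ ≤ 1) :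
    ‖𝓕 f w‖ ≤ exp 1 * (∫ v, ‖f v‖) * exp (-(ε ^ 2 * ‖w‖ ^ 2) / (4 * π)) := by
  have hexp : 1 ≤ exp 1 * exp (-(ε ^ 2 * ‖w‖ ^ 2) / (4 * π)) := by
    rw [← exp_add, one_le_exp_iff, neg_div, ← sub_eq_add_neg, sub_nonneg,
      div_le_one (by positivity)]
    nlinarith [pi_gt_three, mul_nonneg hε (norm_nonneg w)]
  calc ‖𝓕 f w‖ ≤ ∫ v, ‖f v‖ := VectorFourier.norm_fourierIntegral_le_integral_norm _ _ _ _ _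
    _ ≤ (∫ v, ‖f v‖) * (exp 1 * exp (-(ε ^ 2 * ‖w‖ ^ 2) / (4 * π))) :=
        le_mul_of_one_le_right (integral_nonneg fun _ ↦ norm_nonneg _) hexp
    _ = _ := by ring

lemma norm_fourier_le_abs_mul_rpow_of_one_lt_mul_norm {f : V → E} (hf : Integrable f)
    {δ C α : ℝ} (hα : 0 ≤ α) (hmod : ∀ y : V, ‖y‖ < δ → ∫ x, ‖f (x + y) - f x‖ ≤ C * ‖y‖ ^ α)
    {ε : ℝ} (hε : 0 < ε) (hεδ : ε < δ) {w : V} (hεw : 1 < ε * ‖w‖) :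
    ‖𝓕 f w‖ ≤ |C| * ε ^ α := by
  have hw : 0 < ‖w‖ := pos_of_mul_pos_right (one_pos.trans hεw) hε.le
  have hwε : (2 * ‖w‖)⁻¹ ≤ ε := by
    rw [inv_le_iff_one_le_mul₀ (by positivity)]
    nlinarith
  calc ‖𝓕 f w‖ ≤ C / 2 * (2 * ‖w‖)⁻¹ ^ α :=
        norm_fourier_le_of_integral_norm_sub_le hf hmod (norm_pos_iff.mp hw) (hwε.trans_lt hεδ)
    _ ≤ |C| / 2 * ε ^ α := by
        gcongr
        exact le_abs_self C
    _ ≤ |C| * ε ^ α := by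
        have := abs_nonneg C
        have := rpow_nonneg hε.le α
        nlinarith

end HolderDecay

theorem stmt5_general (n : ℕ) (f : EuclideanSpace ℝ (Fin (1+n)) → ℂ)
    (hint : Integrable f)
    (δ : ℝ) (hδ : 0 < δ) (C : ℝ) (α : ℝ) (hα : α ∈ Set.Ioc (0:ℝ) 1)
    (hmod : ∀ y : EuclideanSpace ℝ (Fin (1+n)), ‖y‖ < δ →
      ∫ x, ‖f (x + y) - f x‖ ≤ C * ‖y‖ ^ α) :
    ∃ C' ε₀ : ℝ, 0 < C' ∧ 0 < ε₀ ∧ ∀ ε : ℝ, 0 < ε → ε < ε₀ →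
      ∀ ρ : EuclideanSpace ℝ (Fin (1+n)),
        ‖𝓕 f ρ‖ ≤ C' * (Real.exp (-(ε^2 * ‖ρ‖^2) / (4 * π)) + ε ^ α) := by
  set I := ∫ x, ‖f x‖
  have hI : 0 ≤ exp 1 * I := mul_nonneg (exp_pos 1).le (integral_nonneg fun x ↦ norm_nonneg _)
  refine ⟨exp 1 * I + |C| + 1, δ, by positivity, hδ, fun ε hε hεδ ρ ↦ ?_⟩
  have hgauss : 0 ≤ exp (-(ε ^ 2 * ‖ρ‖ ^ 2) / (4 * π)) := (exp_pos _).le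
  have hεα : 0 ≤ ε ^ α := rpow_nonneg hε.le α
  rcases le_or_gt (ε * ‖ρ‖) 1 with hlow | hhigh
  · calc ‖𝓕 f ρ‖ ≤ exp 1 * I * exp (-(ε ^ 2 * ‖ρ‖ ^ 2) / (4 * π)) :=
          norm_fourier_le_exp_one_mul_gaussian f hε.le hlow
      _ ≤ (exp 1 * I + |C| + 1) * exp (-(ε ^ 2 * ‖ρ‖ ^ 2) / (4 * π)) := by
          gcongr
          linarith [abs_nonneg C]
      _ ≤ _ := by gcongr; exact le_add_of_nonneg_right hεα
  · calc ‖𝓕 f ρ‖ ≤ |C| * ε ^ α :=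
          norm_fourier_le_abs_mul_rpow_of_one_lt_mul_norm hint hα.1.le hmod hε hεδ hhigh
      _ ≤ (exp 1 * I + |C| + 1) * ε ^ α := by
          gcongr
          linarith
      _ ≤ _ := by gcongr; exact le_add_of_nonneg_left hgauss

/-- Fourier decay estimate for bounded, integrable functions with an
L¹ Hölder modulus of continuity (Heck–Wang Lemma 2.1). -/
theorem stmt5 (n : ℕ) (f : EuclideanSpace ℝ (Fin (1+n)) → ℂ)
    (hint : Integrable f) (M : ℝ) (hM : ∀ x, ‖f x‖ ≤ M)
    (δ : ℝ) (hδ : 0 < δ) (C : ℝ) (α : ℝ) (hα : α ∈ Set.Ioc (0:ℝ) 1)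
    (hmod : ∀ y : EuclideanSpace ℝ (Fin (1+n)), ‖y‖ < δ →
      ∫ x, ‖f (x + y) - f x‖ ≤ C * ‖y‖ ^ α) :
    ∃ C' ε₀ : ℝ, 0 < C' ∧ 0 < ε₀ ∧ ∀ ε : ℝ, 0 < ε → ε < ε₀ →
      ∀ ρ : EuclideanSpace ℝ (Fin (1+n)),
        ‖𝓕 f ρ‖ ≤ C' * (Real.exp (-(ε^2 * ‖ρ‖^2) / (4 * π)) + ε ^ α) :=
  stmt5_general n f hint δ hδ C α hα hmod
end
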